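/- arXiv:2306.01952 — 6 statements merged into one kernel-verified Lean document; each statement's English description precedes it below -/
import Mathlib

section
/- Let $A, B, K$ be $d \times d$ real matrices, $h \ne 0$ a real number, $l$ a natural number, and let $x, u, \hat w : \mathbb{N} \to \mathbb{R}^d$ and $M : \mathbb{N} \to \mathbb{N} \to \mathbb{R}^{d\times d}$ satisfy, for all $t$, $\hat w_t = \frac{1}{h}\big(x_{t+1} - x_t - h(Ax_t + Bu_t)\big)$, and for all $t \ge l$, $u_t = -K x_t + h\sum_{i=1}^{l} M_t^i \hat w_{t-i}$. Set $Q_h = I + h(A-BK)$ and, for $0 \le i \le 2l$, $\Psi_{t,i} = Q_h^i\,\mathbf{1}_{i \le l} + h\sum_{j=0}^{l} Q_h^j B\, M_{t-j}^{\,i-j}\,\mathbf{1}_{1 \le i-j \le l}$. Then for every $t \ge 2l$, $x_{t+1} = Q_h^{\,l+1} x_{t-l} + h\sum_{i=0}^{2l} \Psi_{t,i}\, \hat w_{t-i}$. -/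
/-! For `s ≥ l` the state obeys the affine recursion `x (s+1) = Q x s + v s` with
`v s = h (ŵ s + h B ∑ᵢ M_s^i ŵ (s-i))`. Since `t ≥ 2l`, the recursion can be unrolled `l + 1`
times back from `t`; regrouping the resulting double sum by the lag `i` of `ŵ (t-i)` gives the
transfer matrices `Ψ_{t,i}`. -/

/-- The transfer matrix `Ψ_{t,i}`: the coefficient of the estimated disturbance
`ŵ (t-i)` in the unrolled evolution of the state under the DAC policy.
`Ψ_{t,i} = Q^i 𝟙_{i ≤ l} + h ∑_{j=0}^{l} Q^j B M_{t-j}^{i-j} 𝟙_{1 ≤ i-j ≤ l}`. -/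
noncomputable def Psi {d : ℕ} (Q B : Matrix (Fin d) (Fin d) ℝ) (h : ℝ)
    (M : ℕ → ℕ → Matrix (Fin d) (Fin d) ℝ) (l t i : ℕ) : Matrix (Fin d) (Fin d) ℝ :=
  (if i ≤ l then Q ^ i else 0) +
    h • ∑ j ∈ Finset.range (l + 1),
      (if 1 ≤ i - j ∧ i - j ≤ l then Q ^ j * B * M (t - j) (i - j) else 0)

open Finset Matrix

theorem unroll_affine_recurrence {R ι : Type*} [Semiring R] [Fintype ι] [DecidableEq ι]
    (Q : Matrix ι ι R) (x v : ℕ → ι → R) (t n : ℕ) (hn : n ≤ t + 1)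
    (hstep : ∀ j < n, x (t - j + 1) = Q *ᵥ x (t - j) + v (t - j)) :
    x (t + 1) = (Q ^ n) *ᵥ x (t + 1 - n) + ∑ j ∈ range n, (Q ^ j) *ᵥ v (t - j) := by
  induction n with
  | zero => simp
  | succ n ih =>
    rw [ih (by omega) fun j hj => hstep j (by omega), show t + 1 - n = t - n + 1 by omega,
      hstep n n.lt_succ_self, show t + 1 - (n + 1) = t - n by omega, sum_range_succ, pow_succ,
      mulVec_add, mulVec_mulVec]
    abel

theorem closed_loop_step {K ι : Type*} [Field K] [Fintype ι] [DecidableEq ι]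
    (A B F : Matrix ι ι K) {h : K} (hh : h ≠ 0) (l s : ℕ) (x u w : ℕ → ι → K)
    (M : ℕ → ℕ → Matrix ι ι K)
    (hw : w s = h⁻¹ • (x (s + 1) - x s - h • (A *ᵥ x s + B *ᵥ u s)))
    (hu : u s = -(F *ᵥ x s) + h • ∑ i ∈ Icc 1 l, M s i *ᵥ w (s - i)) :
    x (s + 1) = (1 + h • (A - B * F)) *ᵥ x s +
      h • (w s + h • ∑ i ∈ Icc 1 l, (B * M s i) *ᵥ w (s - i)) := by
  have hx : x (s + 1) = x s + h • (A *ᵥ x s + B *ᵥ u s) + h • w s := by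
    rw [hw, smul_inv_smul₀ hh]
    abel
  rw [hx, hu]
  simp only [mulVec_add, mulVec_neg, mulVec_smul, add_mulVec, one_mulVec, smul_mulVec,
    sub_mulVec, mulVec_sum, mulVec_mulVec]
  module

theorem sum_range_sum_ite_sub {X : Type*} [AddCommMonoid X] (l : ℕ) (f : ℕ → ℕ → X) :
    ∑ k ∈ range (2 * l + 1), ∑ j ∈ range (l + 1),
        (if 1 ≤ k - j ∧ k - j ≤ l then f j (k - j) else 0) =
      ∑ j ∈ range (l + 1), ∑ i ∈ Icc 1 l, f j i := by
  rw [sum_comm]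
  refine sum_congr rfl fun j hj => ?_
  rw [mem_range] at hj
  rw [← sum_filter]
  refine sum_bij' (fun k _ => k - j) (fun i _ => j + i) ?_ ?_ ?_ ?_ fun _ _ => rfl
  all_goals intro a ha; simp only [mem_filter, mem_range, mem_Icc] at ha ⊢; omega

theorem sum_Psi_mulVec {d : ℕ} (Q B : Matrix (Fin d) (Fin d) ℝ) (h : ℝ)
    (M : ℕ → ℕ → Matrix (Fin d) (Fin d) ℝ) (l t : ℕ) (w : ℕ → Fin d → ℝ) :
    ∑ i ∈ range (2 * l + 1), Psi Q B h M l t i *ᵥ w (t - i) =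
      ∑ j ∈ range (l + 1), (Q ^ j) *ᵥ w (t - j) +
        h • ∑ j ∈ range (l + 1), ∑ i ∈ Icc 1 l, (Q ^ j * B * M (t - j) i) *ᵥ w (t - j - i) := by
  simp only [Psi, add_mulVec, smul_mulVec, sum_mulVec, sum_add_distrib, ← smul_sum]
  congr 1
  · rw [← sum_subset (range_subset_range.2 (by omega : l + 1 ≤ 2 * l + 1)) fun i _ hi => by
      rw [if_neg (by rw [mem_range] at hi; omega), zero_mulVec]]
    exact sum_congr rfl fun i hi => by rw [if_pos (by rw [mem_range] at hi; omega)]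
  · rw [← sum_range_sum_ite_sub]
    refine congrArg _ (sum_congr rfl fun k _ => sum_congr rfl fun j _ => ?_)
    split_ifs with hkj
    · rw [show t - j - (k - j) = t - k by omega]
    · exact zero_mulVec _

/-- Unrolled evolution of the state under the Disturbance-Action Policy:
for every `t ≥ 2l`, `x (t+1) = Q^(l+1) x (t-l) + h ∑_{i=0}^{2l} Ψ_{t,i} ŵ (t-i)`. -/
theorem stmt2 {d : ℕ} (A B K : Matrix (Fin d) (Fin d) ℝ) (h : ℝ) (hh : h ≠ 0) (l : ℕ)
    (x u w : ℕ → Fin d → ℝ) (M : ℕ → ℕ → Matrix (Fin d) (Fin d) ℝ)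
    (hw : ∀ t, w t = h⁻¹ • (x (t + 1) - x t - h • (A.mulVec (x t) + B.mulVec (u t))))
    (hu : ∀ t, l ≤ t →
      u t = -(K.mulVec (x t)) + h • ∑ i ∈ Finset.Icc 1 l, (M t i).mulVec (w (t - i)))
    (Q : Matrix (Fin d) (Fin d) ℝ) (hQ : Q = 1 + h • (A - B * K)) :
    ∀ t, 2 * l ≤ t →
      x (t + 1) = (Q ^ (l + 1)).mulVec (x (t - l)) +
        h • ∑ i ∈ Finset.range (2 * l + 1), (Psi Q B h M l t i).mulVec (w (t - i)) := by
  intro t ht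
  set v : ℕ → Fin d → ℝ := fun s => h • (w s + h • ∑ i ∈ Icc 1 l, (B * M s i) *ᵥ w (s - i))
  have hstep : ∀ j < l + 1, x (t - j + 1) = Q *ᵥ x (t - j) + v (t - j) := fun j _ => by
    rw [hQ]
    exact closed_loop_step A B K hh l (t - j) x u w M (hw _) (hu _ (by omega))
  rw [unroll_affine_recurrence Q x v t (l + 1) (by omega) hstep,
    show t + 1 - (l + 1) = t - l by omega, sum_Psi_mulVec]
  simp only [v, mulVec_smul, mulVec_add, mulVec_sum, mulVec_mulVec, smul_add, smul_sum,
    sum_add_distrib, mul_assoc]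
end

section
/- Let $h, \gamma > 0$ with $h\gamma \le 1$, let $a \ge 1$, $\kappa, \kappa_B \ge 0$, let $l$ be a natural number, and let $Q_h, B$ and $M_s^k$ (for $s \in \mathbb{N}$, $1 \le k \le l$) be $d \times d$ real matrices satisfying $\|Q_h^j\| \le \kappa^2 (1-h\gamma)^j$ for all $j \ge 0$, $\|B\| \le \kappa_B$, and $\|M_s^k\| \le a(1-h\gamma)^{k-1}$ for all $s$ and all $1 \le k \le l$. Define $\Psi_{t,i} = Q_h^i\,\mathbf{1}_{i \le l} + h\sum_{j=0}^{l} Q_h^j B\, M_{t-j}^{\,i-j}\,\mathbf{1}_{1 \le i-j \le l}$. Then for every $t$ and every $i \ge 1$, $\|\Psi_{t,i}\| \le a\,(l h \kappa_B + 1)\,\kappa^2\,(1-h\gamma)^{i-1}$. -/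
open scoped Matrix.Norms.L2Operator

/-!
Each of the at most `l` nonzero summands `Q^j B M_{t-j}^{i-j}` has norm at most
`κ² ρ^j · κ_B · a ρ^{i-j-1} = a κ_B κ² ρ^{i-1}` with `ρ = 1 - hγ`: the exponents of the two
geometric decays add up to `i - 1` whatever `j` is. The leading term `Q^i` contributes
`κ² ρ^i ≤ a κ² ρ^{i-1}` because `0 ≤ ρ ≤ 1` and `a ≥ 1`.
-/

open Finset

theorem card_filter_range_sub_mem_Icc_le (i l : ℕ) :
    #{j ∈ range (l + 1) | 1 ≤ i - j ∧ i - j ≤ l} ≤ l := by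
  calc #{j ∈ range (l + 1) | 1 ≤ i - j ∧ i - j ≤ l}
      ≤ #(Icc 1 l) := by
        refine card_le_card_of_injOn (fun j => i - j) (fun j hj => ?_) (fun j hj k hk hjk => ?_)
        · simp only [coe_filter, Set.mem_ofPred_eq] at hj
          simpa using hj.2
        · simp only [coe_filter, Set.mem_ofPred_eq, mem_range] at hj hk hjk
          omega
    _ = l := by simp

theorem norm_sum_ite_le_card_mul {ι E : Type*} [SeminormedAddCommGroup E] (s : Finset ι)
    (p : ι → Prop) [DecidablePred p] (f : ι → E) {C : ℝ} (hf : ∀ j ∈ s, p j → ‖f j‖ ≤ C) :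
    ‖∑ j ∈ s, if p j then f j else 0‖ ≤ #{j ∈ s | p j} * C := by
  rw [← sum_filter]
  refine (norm_sum_le_of_le _ fun j hj => ?_).trans (by rw [sum_const, nsmul_eq_mul])
  rw [mem_filter] at hj
  exact hf j hj.1 hj.2

section GeometricDecay

variable {R : Type*} [SeminormedRing R] {Q : R} {c ρ : ℝ}

theorem norm_pow_le_pow_pred (hQ : ∀ j : ℕ, ‖Q ^ j‖ ≤ c * ρ ^ j) (hρ₀ : 0 ≤ ρ) (hρ₁ : ρ ≤ 1)
    (i : ℕ) : ‖Q ^ i‖ ≤ c * ρ ^ (i - 1) := by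
  have hc : 0 ≤ c := by simpa using (norm_nonneg _).trans (hQ 0)
  exact (hQ i).trans (mul_le_mul_of_nonneg_left (pow_le_pow_of_le_one hρ₀ hρ₁ (i.sub_le 1)) hc)

theorem norm_pow_mul_mul_le (hQ : ∀ j : ℕ, ‖Q ^ j‖ ≤ c * ρ ^ j) {B m : R} {κB a : ℝ}
    (hB : ‖B‖ ≤ κB) {j k : ℕ} (hk : 1 ≤ k) (hm : ‖m‖ ≤ a * ρ ^ (k - 1)) :
    ‖Q ^ j * B * m‖ ≤ a * κB * c * ρ ^ (j + k - 1) :=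
  calc ‖Q ^ j * B * m‖ ≤ ‖Q ^ j‖ * ‖B‖ * ‖m‖ := norm_mul₃_le
    _ ≤ c * ρ ^ j * κB * (a * ρ ^ (k - 1)) := by
      have := (norm_nonneg _).trans (hQ j)
      have := (norm_nonneg _).trans hB
      gcongr
      exact hQ j
    _ = a * κB * c * ρ ^ (j + k - 1) := by
      rw [Nat.add_sub_assoc hk, pow_add]
      ring

end GeometricDecay

theorem stmt3_general {d : ℕ} (h γ a κ κB : ℝ) (hh : 0 < h) (hγpos : 0 < γ) (hhγ : h * γ ≤ 1)
    (ha : 1 ≤ a) (l : ℕ)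
    (Qh B : Matrix (Fin d) (Fin d) ℝ) (M : ℕ → ℕ → Matrix (Fin d) (Fin d) ℝ)
    (hQ : ∀ j : ℕ, ‖Qh ^ j‖ ≤ κ ^ 2 * (1 - h * γ) ^ j)
    (hB : ‖B‖ ≤ κB)
    (hM : ∀ s k, 1 ≤ k → k ≤ l → ‖M s k‖ ≤ a * (1 - h * γ) ^ (k - 1)) :
    ∀ t i, 1 ≤ i →
      ‖Psi Qh B h M l t i‖ ≤ a * ((l : ℝ) * h * κB + 1) * κ ^ 2 * (1 - h * γ) ^ (i - 1) := by
  intro t i hi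
  set ρ := 1 - h * γ
  have hρ₀ : 0 ≤ ρ := by linarith
  have hρ₁ : ρ ≤ 1 := by linarith [mul_pos hh hγpos]
  set C := a * κB * κ ^ 2 * ρ ^ (i - 1)
  have hC : 0 ≤ C := by have := (norm_nonneg B).trans hB; positivity
  have hlead : ‖(if i ≤ l then Qh ^ i else 0 : Matrix (Fin d) (Fin d) ℝ)‖ ≤ κ ^ 2 * ρ ^ (i - 1) := by
    split_ifs
    · exact norm_pow_le_pow_pred hQ hρ₀ hρ₁ i
    · rw [norm_zero]; positivity
  have hsum : ‖∑ j ∈ range (l + 1),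
      (if 1 ≤ i - j ∧ i - j ≤ l then Qh ^ j * B * M (t - j) (i - j) else 0)‖ ≤ l * C := by
    refine (norm_sum_ite_le_card_mul _ _ _ fun j _ hj => ?_).trans
      (by gcongr; exact_mod_cast card_filter_range_sub_mem_Icc_le i l)
    have := norm_pow_mul_mul_le (j := j) hQ hB hj.1 (hM (t - j) (i - j) hj.1 hj.2)
    rwa [Nat.add_sub_of_le (by omega : j ≤ i)] at this
  calc ‖Psi Qh B h M l t i‖ ≤ κ ^ 2 * ρ ^ (i - 1) + h * (l * C) := by
        refine (norm_add_le _ _).trans (add_le_add hlead ?_)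
        rw [norm_smul, Real.norm_of_nonneg hh.le]
        gcongr
    _ ≤ a * (κ ^ 2 * ρ ^ (i - 1)) + h * (l * C) :=
        add_le_add_left (le_mul_of_one_le_left (by positivity) ha) _
    _ = a * ((l : ℝ) * h * κB + 1) * κ ^ 2 * ρ ^ (i - 1) := by ring

/-- Bound on the transfer matrices of the DAC policy:
`‖Ψ_{t,i}‖ ≤ a (l h κ_B + 1) κ² (1 - hγ)^(i-1)` for all `t` and all `i ≥ 1`. -/
theorem stmt3 {d : ℕ} (h γ a κ κB : ℝ) (hh : 0 < h) (hγpos : 0 < γ) (hhγ : h * γ ≤ 1)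
    (ha : 1 ≤ a) (hκ : 0 ≤ κ) (hκB : 0 ≤ κB) (l : ℕ)
    (Qh B : Matrix (Fin d) (Fin d) ℝ) (M : ℕ → ℕ → Matrix (Fin d) (Fin d) ℝ)
    (hQ : ∀ j : ℕ, ‖Qh ^ j‖ ≤ κ ^ 2 * (1 - h * γ) ^ j)
    (hB : ‖B‖ ≤ κB)
    (hM : ∀ s k, 1 ≤ k → k ≤ l → ‖M s k‖ ≤ a * (1 - h * γ) ^ (k - 1)) :
    ∀ t i, 1 ≤ i →
      ‖Psi Qh B h M l t i‖ ≤ a * ((l : ℝ) * h * κB + 1) * κ ^ 2 * (1 - h * γ) ^ (i - 1) :=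
  stmt3_general h γ a κ κB hh hγpos hhγ ha l Qh B M hQ hB hM
end

section
/- Let $E$ be a real normed vector space, $n \in \mathbb{N}$, $h > 0$, $T = nh$, and $D, G, L \ge 0$. Let $x : \mathbb{R} \to E$ be differentiable on $[0,T]$ with $\|x(t)\| \le D$ and $\|x'(t)\| \le D$ for all $t \in [0,T]$; let $u : \mathbb{R} \to E$ satisfy $\|u(t)\| \le D$ and $u(t) = u(ih)$ for every $i < n$ and $t \in [ih, (i+1)h)$. Let $c : \mathbb{R} \to E \to E \to \mathbb{R}$ satisfy: (i) for all $t$ and all $p, q, v$ with $\|p\|, \|q\|, \|v\| \le D$, $|c(t,p,v) - c(t,q,v)| \le G D\, \|p - q\|$; (ii) for all $t_1, t_2$ and all $p, v$ with $\|p\|, \|v\| \le D$, $|c(t_1,p,v) - c(t_2,p,v)| \le L |t_1 - t_2| D^2$. Assume $t \mapsto c(t, x(t), u(t))$ is integrable on $[0,T]$. Then $\Big| \int_0^{T} c(t, x(t), u(t))\, dt - h\sum_{i=0}^{n-1} c(ih, x(ih), u(ih)) \Big| \le \tfrac{1}{2}(G+L) D^2 h T$. -/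
/-!
On a sampling cell `[ih, (i+1)h)` the control is frozen at `u(ih)` and the state moves at speed
at most `D`, so the two Lipschitz conditions bound the distance of the integrand from its sample
at `ih` by `(G + L) D² (t - ih)`. Integrating over the cell gives an error of
`(G + L) D² h² / 2`, and summing over the `n = T / h` cells gives `½ (G + L) D² h T`.
-/

open MeasureTheory Set

theorem abs_integral_sub_mul_le_of_abs_sub_le {f : ℝ → ℝ} {a b C K : ℝ} (hab : a ≤ b)
    (hf : IntervalIntegrable f volume a b) (hfC : ∀ t ∈ Ico a b, |f t - C| ≤ K * (t - a)) :
    |(∫ t in a..b, f t) - (b - a) * C| ≤ K * (b - a) ^ 2 / 2 := by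
  have hbound : ∀ᵐ t, t ∈ Ioc a b → ‖f t - C‖ ≤ K * (t - a) :=
    (ae_restrict_iff' measurableSet_Ioc).mp <| ae_restrict_of_ae_eq_of_ae_restrict Ico_ae_eq_Ioc <|
      ae_restrict_of_forall_mem measurableSet_Ico hfC
  have hlin : ∫ t in a..b, K * (t - a) = K * (b - a) ^ 2 / 2 := by
    simp only [intervalIntegral.integral_const_mul,
      intervalIntegral.integral_comp_sub_right fun t => t, integral_id]
    ring
  calc |(∫ t in a..b, f t) - (b - a) * C| = ‖∫ t in a..b, (f t - C)‖ := by
        rw [intervalIntegral.integral_sub hf intervalIntegrable_const,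
          intervalIntegral.integral_const, smul_eq_mul, Real.norm_eq_abs]
    _ ≤ ∫ t in a..b, K * (t - a) :=
        intervalIntegral.norm_integral_le_of_norm_le hab hbound
          ((by fun_prop : Continuous fun t => K * (t - a)).intervalIntegrable _ _)
    _ = K * (b - a) ^ 2 / 2 := hlin

theorem abs_integral_sub_left_riemann_sum_le {f : ℝ → ℝ} {n : ℕ} {h ε : ℝ} (hh : 0 ≤ h)
    (hf : IntervalIntegrable f volume 0 (n * h))
    (hε : ∀ i < n, |(∫ t in i * h..(i + 1) * h, f t) - h * f (i * h)| ≤ ε) :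
    |(∫ t in 0..n * h, f t) - h * ∑ i ∈ Finset.range n, f (i * h)| ≤ n * ε := by
  have hnode : ∀ k ≤ n, (k : ℝ) * h ∈ uIcc 0 (n * h) := fun k hk => by
    rw [uIcc_of_le (by positivity)]
    exact ⟨by positivity, by gcongr⟩
  have hcell : ∀ i < n, IntervalIntegrable f volume (i * h) ((i + 1 : ℕ) * h) := fun i hi =>
    hf.mono_set (uIcc_subset_uIcc (hnode i hi.le) (hnode (i + 1) hi))
  have hsplit := intervalIntegral.sum_integral_adjacent_intervals (a := fun i : ℕ => i * h) hcell
  simp only [Nat.cast_zero, zero_mul, Nat.cast_succ] at hsplit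
  rw [← hsplit, Finset.mul_sum, ← Finset.sum_sub_distrib]
  calc _ ≤ ∑ i ∈ Finset.range n, |(∫ t in i * h..(i + 1) * h, f t) - h * f (i * h)| :=
        Finset.abs_sum_le_sum_abs _ _
    _ ≤ ∑ _i ∈ Finset.range n, ε := Finset.sum_le_sum fun i hi => hε i (Finset.mem_range.mp hi)
    _ = n * ε := by rw [Finset.sum_const, Finset.card_range, nsmul_eq_mul]

theorem abs_integral_sub_left_riemann_sum_le_of_abs_sub_le {f : ℝ → ℝ} {n : ℕ} {h K : ℝ}
    (hh : 0 ≤ h) (hf : IntervalIntegrable f volume 0 (n * h))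
    (hfK : ∀ i < n, ∀ t ∈ Ico ((i : ℝ) * h) ((i + 1) * h), |f t - f (i * h)| ≤ K * (t - i * h)) :
    |(∫ t in 0..n * h, f t) - h * ∑ i ∈ Finset.range n, f (i * h)| ≤ K / 2 * h * (n * h) := by
  have hcell : ∀ i < n, |(∫ t in i * h..(i + 1) * h, f t) - h * f (i * h)| ≤ K * h ^ 2 / 2 := by
    intro i hi
    have hle : (i : ℝ) * h ≤ (i + 1) * h := by gcongr; linarith
    have hsub : uIcc ((i : ℝ) * h) ((i + 1) * h) ⊆ uIcc 0 (n * h) := by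
      rw [uIcc_of_le hle, uIcc_of_le (by positivity)]
      exact Icc_subset_Icc (by positivity) (by gcongr; exact_mod_cast hi)
    simpa only [add_mul, one_mul, add_sub_cancel_left] using
      abs_integral_sub_mul_le_of_abs_sub_le hle (hf.mono_set hsub) (hfK i hi)
  calc _ ≤ n * (K * h ^ 2 / 2) := abs_integral_sub_left_riemann_sum_le hh hf hcell
    _ = K / 2 * h * (n * h) := by ring

theorem abs_sub_le_of_lipschitz {E : Type*} [NormedAddCommGroup E] {c : ℝ → E → E → ℝ}
    {D G L s t : ℝ} {p q v : E} (hD : 0 ≤ D) (hG : 0 ≤ G)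
    (hc1 : ∀ (t : ℝ) (p q v : E), ‖p‖ ≤ D → ‖q‖ ≤ D → ‖v‖ ≤ D →
      |c t p v - c t q v| ≤ G * D * ‖p - q‖)
    (hc2 : ∀ (t1 t2 : ℝ) (p v : E), ‖p‖ ≤ D → ‖v‖ ≤ D →
      |c t1 p v - c t2 p v| ≤ L * |t1 - t2| * D ^ 2)
    (hp : ‖p‖ ≤ D) (hq : ‖q‖ ≤ D) (hv : ‖v‖ ≤ D) (hpq : ‖p - q‖ ≤ D * |t - s|) :
    |c t p v - c s q v| ≤ (G + L) * D ^ 2 * |t - s| :=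
  calc |c t p v - c s q v| ≤ |c t p v - c t q v| + |c t q v - c s q v| := abs_sub_le _ _ _
    _ ≤ G * D * (D * |t - s|) + L * |t - s| * D ^ 2 := by
        gcongr
        · exact (hc1 t p q v hp hq hv).trans (by gcongr)
        · exact hc2 t s q v hq hv
    _ = (G + L) * D ^ 2 * |t - s| := by ring

theorem stmt7_general {E : Type*} [NormedAddCommGroup E] [NormedSpace ℝ E]
    (n : ℕ) (h T D G L : ℝ) (hh : 0 < h) (hT : T = n * h)
    (hD : 0 ≤ D) (hG : 0 ≤ G)
    (x xd u : ℝ → E) (c : ℝ → E → E → ℝ)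
    (hx : ∀ t ∈ Set.Icc (0 : ℝ) T, HasDerivWithinAt x (xd t) (Set.Icc (0 : ℝ) T) t)
    (hxb : ∀ t ∈ Set.Icc (0 : ℝ) T, ‖x t‖ ≤ D)
    (hxd : ∀ t ∈ Set.Icc (0 : ℝ) T, ‖xd t‖ ≤ D)
    (hub : ∀ t : ℝ, ‖u t‖ ≤ D)
    (huc : ∀ i < n, ∀ t ∈ Set.Ico ((i : ℝ) * h) (((i : ℝ) + 1) * h), u t = u ((i : ℝ) * h))
    (hc1 : ∀ (t : ℝ) (p q v : E), ‖p‖ ≤ D → ‖q‖ ≤ D → ‖v‖ ≤ D →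
      |c t p v - c t q v| ≤ G * D * ‖p - q‖)
    (hc2 : ∀ (t1 t2 : ℝ) (p v : E), ‖p‖ ≤ D → ‖v‖ ≤ D →
      |c t1 p v - c t2 p v| ≤ L * |t1 - t2| * D ^ 2)
    (hint : IntervalIntegrable (fun t => c t (x t) (u t)) MeasureTheory.volume 0 T) :
    |(∫ t in (0 : ℝ)..T, c t (x t) (u t)) -
        h * ∑ i ∈ Finset.range n, c ((i : ℝ) * h) (x ((i : ℝ) * h)) (u ((i : ℝ) * h))| ≤
      (1 / 2) * (G + L) * D ^ 2 * h * T := by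
  subst hT
  have hcell : ∀ i < n, ∀ t ∈ Ico ((i : ℝ) * h) ((i + 1) * h),
      |c t (x t) (u t) - c (i * h) (x (i * h)) (u (i * h))| ≤ (G + L) * D ^ 2 * (t - i * h) := by
    intro i hi t ht
    have hs : (i : ℝ) * h ∈ Icc 0 (n * h) :=
      ⟨by positivity, by gcongr⟩
    have ht' : t ∈ Icc 0 (n * h) :=
      ⟨hs.1.trans ht.1, ht.2.le.trans (by gcongr; exact_mod_cast hi)⟩
    have hts : |t - i * h| = t - i * h := abs_of_nonneg (sub_nonneg.mpr ht.1)
    rw [huc i hi t ht, ← hts]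
    refine abs_sub_le_of_lipschitz hD hG hc1 hc2 (hxb t ht') (hxb _ hs) (hub _) ?_
    exact (convex_Icc _ _).norm_image_sub_le_of_norm_hasDerivWithin_le hx hxd hs ht'
  convert abs_integral_sub_left_riemann_sum_le_of_abs_sub_le hh.le hint hcell using 1
  ring

/-- Discretization-error lemma (bounding `R₀` for a single trajectory): the
continuous-time cumulative cost of a trajectory with bounded state, bounded state
derivative, and piecewise-constant control on sampling intervals of length `h` is
approximated by the Riemann sum of sampled costs with error at most
`½ (G+L) D² h T`. -/
theorem stmt7 {E : Type*} [NormedAddCommGroup E] [NormedSpace ℝ E]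
    (n : ℕ) (h T D G L : ℝ) (hh : 0 < h) (hT : T = n * h)
    (hD : 0 ≤ D) (hG : 0 ≤ G) (hL : 0 ≤ L)
    (x xd u : ℝ → E) (c : ℝ → E → E → ℝ)
    (hx : ∀ t ∈ Set.Icc (0 : ℝ) T, HasDerivWithinAt x (xd t) (Set.Icc (0 : ℝ) T) t)
    (hxb : ∀ t ∈ Set.Icc (0 : ℝ) T, ‖x t‖ ≤ D)
    (hxd : ∀ t ∈ Set.Icc (0 : ℝ) T, ‖xd t‖ ≤ D)
    (hub : ∀ t : ℝ, ‖u t‖ ≤ D)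
    (huc : ∀ i < n, ∀ t ∈ Set.Ico ((i : ℝ) * h) (((i : ℝ) + 1) * h), u t = u ((i : ℝ) * h))
    (hc1 : ∀ (t : ℝ) (p q v : E), ‖p‖ ≤ D → ‖q‖ ≤ D → ‖v‖ ≤ D →
      |c t p v - c t q v| ≤ G * D * ‖p - q‖)
    (hc2 : ∀ (t1 t2 : ℝ) (p v : E), ‖p‖ ≤ D → ‖v‖ ≤ D →
      |c t1 p v - c t2 p v| ≤ L * |t1 - t2| * D ^ 2)
    (hint : IntervalIntegrable (fun t => c t (x t) (u t)) MeasureTheory.volume 0 T) :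
    |(∫ t in (0 : ℝ)..T, c t (x t) (u t)) -
        h * ∑ i ∈ Finset.range n, c ((i : ℝ) * h) (x ((i : ℝ) * h)) (u ((i : ℝ) * h))| ≤
      (1 / 2) * (G + L) * D ^ 2 * h * T :=
  stmt7_general n h T D G L hh hT hD hG x xd u c hx hxb hxd hub huc hc1 hc2 hint
end

section
/- Let $E$ be a real normed vector space, $n \in \mathbb{N}$, and $G, D \ge 0$, $\kappa \ge 0$, $h, \gamma > 0$ with $h\gamma \le 1$, and $H, m \in \mathbb{N}$. For each $j < n$ let $c_j : E \to E \to \mathbb{R}$ satisfy, for all $p, q, v, w$ with $\|p\|, \|q\|, \|v\|, \|w\| \le D$: $|c_j(p, v) - c_j(q, v)| \le GD\|p - q\|$ and $|c_j(p, v) - c_j(p, w)| \le GD\|v - w\|$. Let $x_j, y_j, u_j, v_j \in E$ for $j < n$ satisfy $\|x_j\|, \|y_j\|, \|u_j\|, \|v_j\| \le D$ and $\|x_j - y_j\| + \|u_j - v_j\| \le \kappa^2(1+\kappa)(1-h\gamma)^{Hm+1} D$. Then $\Big| \sum_{j=0}^{n-1} c_j(x_j, u_j) - \sum_{j=0}^{n-1}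 c_j(y_j, v_j) \Big| \le n\, G D^2 \kappa^2 (1+\kappa) (1-h\gamma)^{Hm+1}$. -/
theorem abs_sub_le_mul_norm_add_of_lipschitz_left_right {α β : Type*}
    [SeminormedAddCommGroup α] [SeminormedAddCommGroup β] {f : α → β → ℝ} {L D : ℝ}
    (hleft : ∀ p q v, ‖p‖ ≤ D → ‖q‖ ≤ D → ‖v‖ ≤ D → |f p v - f q v| ≤ L * ‖p - q‖)
    (hright : ∀ p v w, ‖p‖ ≤ D → ‖v‖ ≤ D → ‖w‖ ≤ D → |f p v - f p w| ≤ L * ‖v - w‖)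
    {p q : α} {v w : β} (hp : ‖p‖ ≤ D) (hq : ‖q‖ ≤ D) (hv : ‖v‖ ≤ D) (hw : ‖w‖ ≤ D) :
    |f p v - f q w| ≤ L * (‖p - q‖ + ‖v - w‖) :=
  calc |f p v - f q w| ≤ |f p v - f q v| + |f q v - f q w| := abs_sub_le _ _ _
    _ ≤ L * ‖p - q‖ + L * ‖v - w‖ :=
      add_le_add (hleft p q v hp hq hv) (hright q v w hq hv hw)
    _ = L * (‖p - q‖ + ‖v - w‖) := (mul_add _ _ _).symm

theorem abs_sum_range_sub_sum_range_le {n : ℕ} {a b : ℕ → ℝ} {B : ℝ}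
    (h : ∀ j < n, |a j - b j| ≤ B) :
    |∑ j ∈ Finset.range n, a j - ∑ j ∈ Finset.range n, b j| ≤ n * B := by
  rw [← Finset.sum_sub_distrib]
  refine (Finset.abs_sum_le_sum_abs _ _).trans ?_
  simpa using Finset.sum_le_card_nsmul _ _ B fun j hj => h j (Finset.mem_range.1 hj)

theorem stmt8_general {E : Type*} [NormedAddCommGroup E]
    (n : ℕ) (G D κ h γ : ℝ) (H m : ℕ)
    (hG : 0 ≤ G) (hD : 0 ≤ D)
    (c : ℕ → E → E → ℝ)
    (hc1 : ∀ j < n, ∀ p q v : E, ‖p‖ ≤ D → ‖q‖ ≤ D → ‖v‖ ≤ D →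
      |c j p v - c j q v| ≤ G * D * ‖p - q‖)
    (hc2 : ∀ j < n, ∀ p v w : E, ‖p‖ ≤ D → ‖v‖ ≤ D → ‖w‖ ≤ D →
      |c j p v - c j p w| ≤ G * D * ‖v - w‖)
    (x y u v : ℕ → E)
    (hb : ∀ j < n, ‖x j‖ ≤ D ∧ ‖y j‖ ≤ D ∧ ‖u j‖ ≤ D ∧ ‖v j‖ ≤ D)
    (happ : ∀ j < n,
      ‖x j - y j‖ + ‖u j - v j‖ ≤ κ ^ 2 * (1 + κ) * (1 - h * γ) ^ (H * m + 1) * D) :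
    |∑ j ∈ Finset.range n, c j (x j) (u j) - ∑ j ∈ Finset.range n, c j (y j) (v j)| ≤
      n * G * D ^ 2 * κ ^ 2 * (1 + κ) * (1 - h * γ) ^ (H * m + 1) := by
  have hstep : ∀ j < n, |c j (x j) (u j) - c j (y j) (v j)| ≤
      G * D * (κ ^ 2 * (1 + κ) * (1 - h * γ) ^ (H * m + 1) * D) := by
    intro j hj
    obtain ⟨hx, hy, hu, hv⟩ := hb j hj
    exact (abs_sub_le_mul_norm_add_of_lipschitz_left_right (hc1 j hj) (hc2 j hj)
      hx hy hu hv).trans (mul_le_mul_of_nonneg_left (happ j hj) (mul_nonneg hG hD))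
  calc _ ≤ n * (G * D * (κ ^ 2 * (1 + κ) * (1 - h * γ) ^ (H * m + 1) * D)) :=
        abs_sum_range_sub_sum_range_le hstep
    _ = _ := by ring

/-- Bound on `R₁`, the difference between the actual cumulative cost along
`(x_j, u_j)` and the idealized cumulative cost along `(y_j, v_j)`. -/
theorem stmt8 {E : Type*} [NormedAddCommGroup E] [NormedSpace ℝ E]
    (n : ℕ) (G D κ h γ : ℝ) (H m : ℕ)
    (hG : 0 ≤ G) (hD : 0 ≤ D) (hκ : 0 ≤ κ) (hh : 0 < h) (hγpos : 0 < γ) (hhγ : h * γ ≤ 1)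
    (c : ℕ → E → E → ℝ)
    (hc1 : ∀ j < n, ∀ p q v : E, ‖p‖ ≤ D → ‖q‖ ≤ D → ‖v‖ ≤ D →
      |c j p v - c j q v| ≤ G * D * ‖p - q‖)
    (hc2 : ∀ j < n, ∀ p v w : E, ‖p‖ ≤ D → ‖v‖ ≤ D → ‖w‖ ≤ D →
      |c j p v - c j p w| ≤ G * D * ‖v - w‖)
    (x y u v : ℕ → E)
    (hb : ∀ j < n, ‖x j‖ ≤ D ∧ ‖y j‖ ≤ D ∧ ‖u j‖ ≤ D ∧ ‖v j‖ ≤ D)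
    (happ : ∀ j < n,
      ‖x j - y j‖ + ‖u j - v j‖ ≤ κ ^ 2 * (1 + κ) * (1 - h * γ) ^ (H * m + 1) * D) :
    |∑ j ∈ Finset.range n, c j (x j) (u j) - ∑ j ∈ Finset.range n, c j (y j) (v j)| ≤
      n * G * D ^ 2 * κ ^ 2 * (1 + κ) * (1 - h * γ) ^ (H * m + 1) :=
  stmt8_general n G D κ h γ H m hG hD c hc1 hc2 x y u v hb happ
end

section
/- Let $E$ be a real normed vector space, $H \ge 1$ and $t \ge H$ natural numbers, $L, \eta, G \ge 0$, and let $f : (\{0,1,\ldots,H\} \to E) \to \mathbb{R}$ be coordinate-wise $L$-Lipschitz, i.e., for any $j \in \{0,\ldots,H\}$ and any tuples $v, w$ with $v_k = w_k$ for all $k \ne j$, $|f(v) - f(w)| \le L \|v_j - w_j\|$. Let $x : \mathbb{N} \to E$ satisfy $\|x_{s+1} - x_s\| \le \eta G$ for all $s$. Then $\big| f(x_{t-H}, x_{t-H+1}, \ldots, x_t) - f(x_t, x_t, \ldots, x_t) \big| \le L H^2 \eta G$. -/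
lemma step_bound {E : Type*} [NormedAddCommGroup E]
    (x : ℕ → E) (η G : ℝ) (hx : ∀ s, ‖x (s + 1) - x s‖ ≤ η * G) :
    ∀ (n a : ℕ), ‖x (a + n) - x a‖ ≤ n * (η * G) := by
  intro n
  induction n with
  | zero => intro a; simp
  | succ n ih =>
    intro a
    have : x (a + (n+1)) - x a = (x (a + n + 1) - x (a + n)) + (x (a + n) - x a) := by
      rw [show a + (n+1) = a + n + 1 from rfl]; abel
    calc ‖x (a + (n+1)) - x a‖ ≤ ‖x (a + n + 1) - x (a + n)‖ + ‖x (a + n) - x a‖ := by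
          rw [this]; exact norm_add_le _ _
      _ ≤ η * G + n * (η * G) := add_le_add (hx _) (ih a)
      _ = (n + 1 : ℕ) * (η * G) := by push_cast; ring

/-- Memory step of the OGD-with-memory analysis: a coordinate-wise `L`-Lipschitz
loss with `H` steps of memory evaluated on the trailing window of iterates differs
from its evaluation at the repeated current iterate by at most `L H² η G`, provided
consecutive iterates move by at most `η G`. -/
theorem stmt10 {E : Type*} [NormedAddCommGroup E] [NormedSpace ℝ E]
    (H t : ℕ) (hH : 1 ≤ H) (ht : H ≤ t)
    (L η G : ℝ) (hL : 0 ≤ L) (hη : 0 ≤ η) (hG : 0 ≤ G)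
    (f : (Fin (H + 1) → E) → ℝ)
    (hf : ∀ (j : Fin (H + 1)) (v w : Fin (H + 1) → E),
      (∀ k, k ≠ j → v k = w k) → |f v - f w| ≤ L * ‖v j - w j‖)
    (x : ℕ → E) (hx : ∀ s, ‖x (s + 1) - x s‖ ≤ η * G) :
    |f (fun k => x (t - H + (k : ℕ))) - f (fun _ => x t)| ≤ L * H ^ 2 * η * G := by
  set g : ℕ → (Fin (H + 1) → E) := fun i k => if (k : ℕ) < i then x t else x (t - H + (k : ℕ))
    with hg
  have hgH : g H = (fun _ => x t) := by
    funext k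
    simp only [hg]
    by_cases h : (k : ℕ) < H
    · simp [h]
    · have : (k : ℕ) = H := by omega
      simp [h, this, Nat.sub_add_cancel ht]
  have hnorm : η * G ≤ ↑H * (η * G) ∨ True := Or.inr trivial
  have key : ∀ i ≤ H, |f (g 0) - f (g i)| ≤ i * (L * (H * (η * G))) := by
    intro i hi
    induction i with
    | zero => simp
    | succ i ih =>
      have hi' : i ≤ H := by omega
      have hstep : |f (g i) - f (g (i + 1))| ≤ L * (H * (η * G)) := by
        have hj : i < H + 1 := by omega
        have := hf ⟨i, hj⟩ (g i) (g (i + 1)) (by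
          intro k hk
          simp only [hg]
          have : (k : ℕ) < i ↔ (k : ℕ) < i + 1 := by
            constructor <;> intro h
            · omega
            · rcases Nat.lt_or_ge (k : ℕ) i with h' | h'
              · exact h'
              · exfalso; apply hk; apply Fin.ext; simp; omega
          by_cases h : (k : ℕ) < i
          · simp [h, this.mp h]
          · rw [if_neg h, if_neg (fun hh => h (this.mpr hh))])
        refine this.trans ?_
        have hcoord : g i ⟨i, hj⟩ - g (i + 1) ⟨i, hj⟩ = x (t - H + i) - x t := by
          simp [hg]
        rw [hcoord]
        have : ‖x (t - H + i) - x t‖ ≤ (H - i : ℕ) * (η * G) := by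
          rw [← norm_neg, neg_sub]
          have ht' : t = (t - H + i) + (H - i) := by omega
          calc ‖x t - x (t - H + i)‖ = ‖x ((t - H + i) + (H - i)) - x (t - H + i)‖ := by
                rw [← ht']
            _ ≤ (H - i : ℕ) * (η * G) := step_bound x η G hx _ _
        refine (mul_le_mul_of_nonneg_left this hL).trans ?_
        have : ((H - i : ℕ) : ℝ) ≤ (H : ℝ) := by
          exact_mod_cast Nat.sub_le H i
        have hηG : 0 ≤ η * G := mul_nonneg hη hG
        exact mul_le_mul_of_nonneg_left (mul_le_mul_of_nonneg_right this hηG) hL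
      calc |f (g 0) - f (g (i+1))|
          ≤ |f (g 0) - f (g i)| + |f (g i) - f (g (i+1))| := by
            have : f (g 0) - f (g (i+1)) = (f (g 0) - f (g i)) + (f (g i) - f (g (i+1))) := by ring
            rw [this]; exact abs_add_le _ _
        _ ≤ i * (L * (H * (η * G))) + L * (H * (η * G)) := add_le_add (ih hi') hstep
        _ = (i + 1 : ℕ) * (L * (H * (η * G))) := by push_cast; ring
  have hg0 : g 0 = (fun k : Fin (H + 1) => x (t - H + (k : ℕ))) := by
    funext k; simp [hg]
  have := key H le_rfl
  rw [hg0, hgH] at this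
  calc |f (fun k => x (t - H + (k : ℕ))) - f (fun _ => x t)|
      ≤ H * (L * (H * (η * G))) := this
    _ = L * H ^ 2 * η * G := by ring
end

section
/- Let $A, B, K$ be $d \times d$ real matrices, $h \ne 0$, $l \in \mathbb{N}$, and let $x, u, \hat w : \mathbb{N} \to \mathbb{R}^d$ and $M : \mathbb{N} \to \mathbb{N} \to \mathbb{R}^{d \times d}$ satisfy, for all $t$, $\hat w_t = \frac{1}{h}(x_{t+1} - x_t - h(Ax_t + Bu_t))$, and for all $t \ge l$, $u_t = -Kx_t + h\sum_{i=1}^{l} M_t^i \hat w_{t-i}$. Set $Q_h = I + h(A-BK)$, $\Psi_{t,i} = Q_h^i \mathbf{1}_{i \le l} + h\sum_{j=0}^{l} Q_h^j B M_{t-j}^{i-j} \mathbf{1}_{1 \le i-j \le l}$, and define the ideal state $y_{t+1} = h\sum_{i=0}^{2l} \Psi_{t,i} \hat w_{t-i}$ and ideal action $v_t = -K y_t + h \sum_{i=1}^{l} M_t^i \hat w_{t-i}$. Then for every $t \ge 2l$: (a) $x_{t+1} - y_{t+1} = Q_h^{\,l+1} x_{t-l}$; and (b) if moreover $\|Q_h^{\,l+1}\|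 \le \kappa^2(1-h\gamma)^{l+1}$ and $\|K\| \le \kappa$, then $\|x_{t+1} - y_{t+1}\| \le \kappa^2(1-h\gamma)^{l+1}\|x_{t-l}\|$ and $\|u_{t+1} - v_{t+1}\| \le \kappa^3 (1-h\gamma)^{l+1} \|x_{t-l}\|$. -/
open scoped Matrix.Norms.L2Operator

/-- Multiplication of a matrix with a vector of `EuclideanSpace ℝ (Fin d)`
(so that the vector carries the ℓ² norm). -/
noncomputable def mulVecE {d : ℕ} (A : Matrix (Fin d) (Fin d) ℝ)
    (x : EuclideanSpace ℝ (Fin d)) : EuclideanSpace ℝ (Fin d) :=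
  WithLp.toLp 2 (A.mulVec x)

/-!
For `t ≥ l` the estimated disturbance `ŵ_t` absorbs the model error, so the closed loop is the
affine recurrence `x_{s+1} = Q_h x_s + h (ŵ_s + B (h ∑_k M_s^k ŵ_{s-k}))`. Unrolling it `l + 1`
steps back from `t + 1` leaves `Q_h^{l+1} x_{t-l}` plus a double convolution of `ŵ`; grouping that
convolution by the total lag `i = j + k` gives exactly `h ∑_i Ψ_{t,i} ŵ_{t-i} = y_{t+1}`. The
action gap is `-K (x_{t+1} - y_{t+1})`, which yields the extra factor `κ`.
-/

open Finset

theorem eq_pow_smul_add_sum_of_forall_succ_eq {M E : Type*} [Monoid M] [AddCommMonoid E]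
    [DistribMulAction M E] (q : M) {x c : ℕ → E} {s₀ : ℕ}
    (hx : ∀ s, s₀ ≤ s → x (s + 1) = q • x s + c s) {n : ℕ} (hn : s₀ ≤ n) :
    ∀ k, x (n + k) = q ^ k • x n + ∑ j ∈ range k, q ^ j • c (n + k - 1 - j)
  | 0 => by simp
  | k + 1 => by
    rw [← add_assoc, hx _ (by omega), eq_pow_smul_add_sum_of_forall_succ_eq q hx hn k,
      sum_range_succ', smul_add, smul_sum, add_assoc]
    simp_rw [smul_smul, ← pow_succ', pow_zero, one_smul, Nat.add_sub_cancel, Nat.sub_zero,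
      Nat.sub_sub, add_comm 1]

theorem sum_range_ite_le_eq_sum_range_succ {E : Type*} [AddCommMonoid E] {l n : ℕ} (hl : l < n)
    (f : ℕ → E) : ∑ i ∈ range n, (if i ≤ l then f i else 0) = ∑ i ∈ range (l + 1), f i := by
  rw [← sum_filter]
  congr 1
  ext i
  simp only [mem_filter, mem_range]
  omega

theorem sum_range_sum_range_ite_sub_eq_sum_Icc {E : Type*} [AddCommMonoid E] (l : ℕ)
    (F : ℕ → ℕ → E) :
    ∑ i ∈ range (2 * l + 1), ∑ j ∈ range (l + 1), (if 1 ≤ i - j ∧ i - j ≤ l then F j i else 0) =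
      ∑ j ∈ range (l + 1), ∑ k ∈ Icc 1 l, F j (j + k) := by
  rw [sum_comm]
  refine sum_congr rfl fun j hj => ?_
  have hband : (range (2 * l + 1)).filter (fun i => 1 ≤ i - j ∧ i - j ≤ l) =
      (Icc 1 l).map (addLeftEmbedding j) := by
    ext i
    simp only [mem_filter, mem_range, mem_map, mem_Icc, addLeftEmbedding_apply]
    have hjl := mem_range.mp hj
    constructor
    · intro hi; exact ⟨i - j, by omega, by omega⟩
    · rintro ⟨k, hk, rfl⟩; omega
  rw [← sum_filter, hband, sum_map]
  rfl

section DAC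

variable {d : ℕ}

theorem mulVecE_eq_toEuclideanCLM (A : Matrix (Fin d) (Fin d) ℝ) (x : EuclideanSpace ℝ (Fin d)) :
    mulVecE A x = Matrix.toEuclideanCLM (𝕜 := ℝ) A x := rfl

theorem norm_mulVecE_le (A : Matrix (Fin d) (Fin d) ℝ) (x : EuclideanSpace ℝ (Fin d)) :
    ‖mulVecE A x‖ ≤ ‖A‖ * ‖x‖ :=
  (Matrix.toEuclideanCLM (𝕜 := ℝ) A).le_opNorm x

noncomputable def dacControl (h : ℝ) (M : ℕ → ℕ → Matrix (Fin d) (Fin d) ℝ)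
    (w : ℕ → EuclideanSpace ℝ (Fin d)) (l t : ℕ) : EuclideanSpace ℝ (Fin d) :=
  h • ∑ i ∈ Icc 1 l, mulVecE (M t i) (w (t - i))

theorem succ_eq_mulVecE_add_of_dac {A B K Q : Matrix (Fin d) (Fin d) ℝ} {h : ℝ} (hh : h ≠ 0)
    {l : ℕ} {x u w : ℕ → EuclideanSpace ℝ (Fin d)} {M : ℕ → ℕ → Matrix (Fin d) (Fin d) ℝ}
    (hw : ∀ t, w t = h⁻¹ • (x (t + 1) - x t - h • (mulVecE A (x t) + mulVecE B (u t))))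
    (hu : ∀ t, l ≤ t → u t = -(mulVecE K (x t)) + dacControl h M w l t)
    (hQ : Q = 1 + h • (A - B * K)) {s : ℕ} (hs : l ≤ s) :
    x (s + 1) = mulVecE Q (x s) + h • (w s + mulVecE B (dacControl h M w l s)) := by
  have hx : x (s + 1) = x s + h • (mulVecE A (x s) + mulVecE B (u s)) + h • w s := by
    rw [hw s, smul_smul, mul_inv_cancel₀ hh, one_smul]; abel
  rw [hx, hu s hs, hQ]
  simp only [mulVecE_eq_toEuclideanCLM, map_add, map_smul, map_sub, map_neg, map_mul, map_one,
    add_apply, smul_apply, sub_apply, mul_apply_eq_comp, one_apply_eq_self, smul_add,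
    smul_neg, smul_sub]
  abel

theorem toEuclideanCLM_pow_smul_eq_mulVecE (Q : Matrix (Fin d) (Fin d) ℝ) (j : ℕ)
    (v : EuclideanSpace ℝ (Fin d)) :
    (Matrix.toEuclideanCLM (𝕜 := ℝ) Q : Module.End ℝ (EuclideanSpace ℝ (Fin d))) ^ j • v =
      mulVecE (Q ^ j) v := by
  rw [← ContinuousLinearMap.toLinearMap_pow, ← map_pow]; rfl

theorem mulVecE_Psi (Q B : Matrix (Fin d) (Fin d) ℝ) (h : ℝ)
    (M : ℕ → ℕ → Matrix (Fin d) (Fin d) ℝ) (l t i : ℕ) (v : EuclideanSpace ℝ (Fin d)) :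
    mulVecE (Psi Q B h M l t i) v = (if i ≤ l then mulVecE (Q ^ i) v else 0) +
      h • ∑ j ∈ range (l + 1),
        (if 1 ≤ i - j ∧ i - j ≤ l then mulVecE (Q ^ j * B * M (t - j) (i - j)) v else 0) := by
  simp only [mulVecE_eq_toEuclideanCLM, Psi, map_add, map_smul, map_sum, apply_ite, map_zero,
    add_apply, smul_apply, FunLike.coe_sum, Finset.sum_apply, ite_apply, zero_apply]

theorem sum_pow_mulVecE_eq_sum_Psi (Q B : Matrix (Fin d) (Fin d) ℝ) (h : ℝ)
    (M : ℕ → ℕ → Matrix (Fin d) (Fin d) ℝ) (w : ℕ → EuclideanSpace ℝ (Fin d)) (l t : ℕ) :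
    ∑ j ∈ range (l + 1),
        mulVecE (Q ^ j) (h • (w (t - j) + mulVecE B (dacControl h M w l (t - j)))) =
      h • ∑ i ∈ range (2 * l + 1), mulVecE (Psi Q B h M l t i) (w (t - i)) := by
  simp only [mulVecE_Psi, sum_add_distrib, ← smul_sum, sum_range_sum_range_ite_sub_eq_sum_Icc,
    sum_range_ite_le_eq_sum_range_succ (by omega : l < 2 * l + 1), add_tsub_cancel_left,
    dacControl, smul_add]
  simp only [mulVecE_eq_toEuclideanCLM, map_add, map_smul, map_sum, map_mul,
    mul_apply_eq_comp, Nat.sub_sub, smul_sum, sum_add_distrib]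

end DAC

/-- Comparison of the actual state/action with the ideal state/action under the
DAC policy: (a) `x (t+1) - y (t+1) = Q^(l+1) x (t-l)`, and (b) under the decay
bound on `Q^(l+1)` and `‖K‖ ≤ κ`, the stated norm bounds on `x (t+1) - y (t+1)`
and `u (t+1) - v (t+1)`. -/
theorem stmt13 {d : ℕ} (A B K : Matrix (Fin d) (Fin d) ℝ) (h : ℝ) (hh : h ≠ 0)
    (γ κ : ℝ) (l : ℕ)
    (x u w y v : ℕ → EuclideanSpace ℝ (Fin d)) (M : ℕ → ℕ → Matrix (Fin d) (Fin d) ℝ)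
    (hw : ∀ t, w t = h⁻¹ • (x (t + 1) - x t - h • (mulVecE A (x t) + mulVecE B (u t))))
    (hu : ∀ t, l ≤ t →
      u t = -(mulVecE K (x t)) + h • ∑ i ∈ Finset.Icc 1 l, mulVecE (M t i) (w (t - i)))
    (Q : Matrix (Fin d) (Fin d) ℝ) (hQ : Q = 1 + h • (A - B * K))
    (hy : ∀ t, 2 * l ≤ t →
      y (t + 1) = h • ∑ i ∈ Finset.range (2 * l + 1), mulVecE (Psi Q B h M l t i) (w (t - i)))
    (hv : ∀ t, v t = -(mulVecE K (y t)) + h • ∑ i ∈ Finset.Icc 1 l, mulVecE (M t i) (w (t - i))) :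
    ∀ t, 2 * l ≤ t →
      x (t + 1) - y (t + 1) = mulVecE (Q ^ (l + 1)) (x (t - l)) ∧
      (‖Q ^ (l + 1)‖ ≤ κ ^ 2 * (1 - h * γ) ^ (l + 1) → ‖K‖ ≤ κ →
        ‖x (t + 1) - y (t + 1)‖ ≤ κ ^ 2 * (1 - h * γ) ^ (l + 1) * ‖x (t - l)‖ ∧
        ‖u (t + 1) - v (t + 1)‖ ≤ κ ^ 3 * (1 - h * γ) ^ (l + 1) * ‖x (t - l)‖) := by
  intro t ht
  have hx := eq_pow_smul_add_sum_of_forall_succ_eq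
    (Matrix.toEuclideanCLM (𝕜 := ℝ) Q : Module.End ℝ (EuclideanSpace ℝ (Fin d)))
    (fun s hs ↦ succ_eq_mulVecE_add_of_dac hh hw hu hQ hs) (n := t - l) (by omega) (l + 1)
  simp only [toEuclideanCLM_pow_smul_eq_mulVecE, show t - l + (l + 1) = t + 1 by omega,
    Nat.add_sub_cancel] at hx
  have hdiff : x (t + 1) - y (t + 1) = mulVecE (Q ^ (l + 1)) (x (t - l)) := by
    rw [hx, hy t ht, ← sum_pow_mulVecE_eq_sum_Psi, add_sub_cancel_right]
  have hdu : u (t + 1) - v (t + 1) = -mulVecE K (x (t + 1) - y (t + 1)) := by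
    rw [hu (t + 1) (by omega), hv (t + 1)]
    simp only [mulVecE_eq_toEuclideanCLM, map_sub]
    abel
  refine ⟨hdiff, fun hQκ hKκ ↦ ?_⟩
  have hxy : ‖x (t + 1) - y (t + 1)‖ ≤ κ ^ 2 * (1 - h * γ) ^ (l + 1) * ‖x (t - l)‖ :=
    hdiff ▸ (norm_mulVecE_le _ _).trans (by gcongr)
  refine ⟨hxy, ?_⟩
  calc ‖u (t + 1) - v (t + 1)‖ ≤ ‖K‖ * ‖x (t + 1) - y (t + 1)‖ := by
        rw [hdu, norm_neg]; exact norm_mulVecE_le _ _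
    _ ≤ κ * (κ ^ 2 * (1 - h * γ) ^ (l + 1) * ‖x (t - l)‖) := by
        gcongr; exact (norm_nonneg K).trans hKκ
    _ = κ ^ 3 * (1 - h * γ) ^ (l + 1) * ‖x (t - l)‖ := by ring
end
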